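/- Let G be a compact Hausdorff group and let H₁, H₂ be closed subgroups of G with H₁ ⊆ H₂ or H₂ ⊆ H₁. Then for every continuous finite-dimensional irreducible unitary representation σ of H₁ and every complex Hilbert space 𝓗 carrying a continuous unitary representation of G, the isotypical projection p_σ on 𝓗 is H₂-harmonically proper; in particular p_σ ∈ 𝒜_{H₂}(𝓗), the operator-norm closure of the H₂-harmonically proper operators on 𝓗. -/

import Mathlib

open MeasureTheory ComplexConjugate Matrix

noncomputable section

/-- A continuous finite-dimensional unitary (matrix) representation of a topological group. -/
structure FinUnitaryRep (Γ : Type) [Group Γ] [TopologicalSpace Γ] where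
  dim : ℕ
  ρ : Γ →* Matrix.unitaryGroup (Fin dim) ℂ
  cont : Continuous fun g => (ρ g : Matrix (Fin dim) (Fin dim) ℂ)

namespace FinUnitaryRep

variable {Γ : Type} [Group Γ] [TopologicalSpace Γ]

/-- The character of a finite-dimensional representation. -/
def char (σ : FinUnitaryRep Γ) : Γ → ℂ :=
  fun g => Matrix.trace ((σ.ρ g : Matrix (Fin σ.dim) (Fin σ.dim) ℂ))

/-- Irreducibility: no nontrivial invariant subspace (and nonzero). -/
def IsIrreducible (σ : FinUnitaryRep Γ) : Prop :=
  0 < σ.dim ∧ ∀ W : Submodule ℂ (Fin σ.dim → ℂ),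
    (∀ g : Γ, ∀ v ∈ W, Matrix.mulVec ((σ.ρ g : Matrix (Fin σ.dim) (Fin σ.dim) ℂ)) v ∈ W) →
    W = ⊥ ∨ W = ⊤

/-- Restriction of a representation along a continuous group homomorphism. -/
@[reducible] def res {Δ : Type} [Group Δ] [TopologicalSpace Δ] (f : Δ →* Γ) (hf : Continuous f)
    (π : FinUnitaryRep Γ) : FinUnitaryRep Δ :=
  ⟨π.dim, π.ρ.comp f, π.cont.comp hf⟩

end FinUnitaryRep

variable {Γ : Type} [Group Γ] [TopologicalSpace Γ] [MeasurableSpace Γ]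

/-- The isotypical projection `p_σ = (dim σ) ∫ conj (χ_σ h) U h dμ(h)` associated to an
irreducible representation `σ`, for a representation `U` on a normed space. -/
def isoProj (μ : Measure Γ) {E : Type} [NormedAddCommGroup E] [NormedSpace ℂ E]
    (U : Γ →* (E →L[ℂ] E)) (σ : FinUnitaryRep Γ) : E →L[ℂ] E :=
  (σ.dim : ℂ) • ∫ h, (conj (σ.char h)) • U h ∂μ

/-- The isotypical projection on the representation space of a finite-dimensional
representation `π`, associated to an irreducible representation `σ`. -/
def isoVecProj (μ : Measure Γ) (π : FinUnitaryRep Γ) (σ : FinUnitaryRep Γ)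
    (v : Fin π.dim → ℂ) : Fin π.dim → ℂ :=
  (σ.dim : ℂ) • ∫ h, (conj (σ.char h)) • Matrix.mulVec ((π.ρ h : Matrix (Fin π.dim) (Fin π.dim) ℂ)) v ∂μ

variable {E₁ E₂ : Type} [NormedAddCommGroup E₁] [NormedSpace ℂ E₁]
  [NormedAddCommGroup E₂] [NormedSpace ℂ E₂]

/-- `B` is harmonically finite if `p_σ B p_τ = 0` for all but finitely many pairs of
(unitary equivalence classes of) irreducible representations, identified by their characters. -/
def HarmonicallyFinite (μ : Measure Γ) (U₁ : Γ →* (E₁ →L[ℂ] E₁)) (U₂ : Γ →* (E₂ →L[ℂ] E₂))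
    (B : E₁ →L[ℂ] E₂) : Prop :=
  {χ : (Γ → ℂ) × (Γ → ℂ) | ∃ σ τ : FinUnitaryRep Γ, σ.IsIrreducible ∧ τ.IsIrreducible ∧
    χ.1 = σ.char ∧ χ.2 = τ.char ∧
    (isoProj μ U₂ σ).comp (B.comp (isoProj μ U₁ τ)) ≠ 0}.Finite

/-- `B` is harmonically proper if each row and column of its harmonic matrix is finite. -/
def HarmonicallyProper (μ : Measure Γ) (U₁ : Γ →* (E₁ →L[ℂ] E₁)) (U₂ : Γ →* (E₂ →L[ℂ] E₂))
    (B : E₁ →L[ℂ] E₂) : Prop :=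
  ∀ σ : FinUnitaryRep Γ, σ.IsIrreducible →
    {χ : Γ → ℂ | ∃ τ : FinUnitaryRep Γ, τ.IsIrreducible ∧ χ = τ.char ∧
      ((isoProj μ U₂ σ).comp (B.comp (isoProj μ U₁ τ)) ≠ 0 ∨
       (isoProj μ U₂ τ).comp (B.comp (isoProj μ U₁ σ)) ≠ 0)}.Finite

/-- The operator-norm closure of the harmonically finite operators. -/
def KH (μ : Measure Γ) (U₁ : Γ →* (E₁ →L[ℂ] E₁)) (U₂ : Γ →* (E₂ →L[ℂ] E₂)) :
    Set (E₁ →L[ℂ] E₂) :=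
  closure {B | HarmonicallyFinite μ U₁ U₂ B}

/-- The operator-norm closure of the harmonically proper operators. -/
def AH (μ : Measure Γ) (U₁ : Γ →* (E₁ →L[ℂ] E₁)) (U₂ : Γ →* (E₂ →L[ℂ] E₂)) :
    Set (E₁ →L[ℂ] E₂) :=
  closure {B | HarmonicallyProper μ U₁ U₂ B}

end

/-!
If `H₁ ≤ H₂`, the projection `p_ρ` of an `H₂`-type `ρ` commutes with every `U h`, `h ∈ H₂ ⊇ H₁`,
hence with the `H₁`-integral `p_σ`. If `H₂ ≤ H₁`, then `p_σ` commutes with every `U h`,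
`h ∈ H₁ ⊇ H₂` (its kernel `conj χ_σ` is a class function and Haar measure on a compact group is
bi-invariant), hence with `p_ρ`. Either way `p_σ` commutes with all `p_ρ`. Isotypical projections
of inequivalent irreducibles are orthogonal, since `χ_τ * χ_ρ = 0` by Schur's lemma applied to the
averaged intertwiners `∫ τ(h) A ρ(h)⁻¹ dh`. Hence `p_τ p_σ p_ρ = p_σ p_τ p_ρ = 0` unless `τ ≅ ρ`:
each row and column of the harmonic matrix of `p_σ` has at most one nonzero entry.
-/

open scoped ENNReal

namespace FinUnitaryRep

variable {Γ : Type} [Group Γ] [TopologicalSpace Γ] (σ : FinUnitaryRep Γ)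

def toMatrix (g : Γ) : Matrix (Fin σ.dim) (Fin σ.dim) ℂ := σ.ρ g

lemma toMatrix_mul (a b : Γ) : σ.toMatrix (a * b) = σ.toMatrix a * σ.toMatrix b := by
  simp [toMatrix]

lemma char_apply (g : Γ) : σ.char g = (σ.toMatrix g).trace := rfl

@[fun_prop]
lemma continuous_toMatrix : Continuous σ.toMatrix := σ.cont

@[fun_prop]
lemma continuous_char : Continuous σ.char :=
  σ.continuous_toMatrix.matrix_trace

lemma char_mul_comm (a b : Γ) : σ.char (a * b) = σ.char (b * a) := by
  rw [char_apply, char_apply, toMatrix_mul, toMatrix_mul, Matrix.trace_mul_comm]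

variable {σ} {τ : FinUnitaryRep Γ}

lemma char_eq_of_linearEquiv_intertwines (e : (Fin τ.dim → ℂ) ≃ₗ[ℂ] (Fin σ.dim → ℂ))
    (he : ∀ g v, e (τ.toMatrix g *ᵥ v) = σ.toMatrix g *ᵥ e v) : σ.char = τ.char := by
  funext g
  have hconj : toLin' (σ.toMatrix g) = e.conj (toLin' (τ.toMatrix g)) := by
    refine LinearMap.ext fun v => ?_
    simp [LinearEquiv.conj_apply, he]
  rw [char_apply, char_apply, ← Matrix.trace_toLin'_eq, ← Matrix.trace_toLin'_eq, hconj,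
    LinearMap.trace_conj']

theorem eq_zero_of_intertwines (hσ : σ.IsIrreducible) (hτ : τ.IsIrreducible)
    (hne : σ.char ≠ τ.char) {M : Matrix (Fin σ.dim) (Fin τ.dim) ℂ}
    (hM : ∀ g, σ.toMatrix g * M = M * τ.toMatrix g) : M = 0 := by
  have hMv : ∀ g v, M *ᵥ (τ.toMatrix g *ᵥ v) = σ.toMatrix g *ᵥ (M *ᵥ v) := by
    intro g v
    rw [mulVec_mulVec, mulVec_mulVec, hM]
  by_contra hM0
  have hφ : M.mulVecLin ≠ 0 := fun h => hM0 (Matrix.toLin'.injective (by rw [map_zero]; exact h))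
  have hker : LinearMap.ker M.mulVecLin = ⊥ := by
    refine (hτ.2 _ fun g v hv => ?_).resolve_right fun h => hφ (LinearMap.ker_eq_top.mp h)
    simp only [LinearMap.mem_ker, mulVecLin_apply] at hv ⊢
    rw [← toMatrix, hMv, hv, mulVec_zero]
  have hrange : LinearMap.range M.mulVecLin = ⊤ := by
    refine (hσ.2 _ ?_).resolve_left fun h => hφ (LinearMap.range_eq_bot.mp h)
    rintro g _ ⟨v, rfl⟩
    exact ⟨_, hMv g v⟩
  exact hne (char_eq_of_linearEquiv_intertwines (.ofBijective M.mulVecLin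
    ⟨LinearMap.ker_eq_bot.mp hker, LinearMap.range_eq_top.mp hrange⟩) hMv)

end FinUnitaryRep

namespace Matrix

variable {X : Type*} [MeasurableSpace X] {μ : Measure X} {𝕜 : Type*} [RCLike 𝕜] {l m n : Type*}

noncomputable def entrywiseIntegral (F : X → Matrix m n 𝕜) (μ : Measure X) : Matrix m n 𝕜 :=
  Matrix.of fun i j => ∫ x, F x i j ∂μ

lemma entrywiseIntegral_apply (F : X → Matrix m n 𝕜) (i : m) (j : n) :
    entrywiseIntegral F μ i j = ∫ x, F x i j ∂μ := rfl

lemma mul_entrywiseIntegral [Fintype m] (B : Matrix l m 𝕜) {F : X → Matrix m n 𝕜}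
    (hF : ∀ i j, Integrable (fun x => F x i j) μ) :
    B * entrywiseIntegral F μ = entrywiseIntegral (fun x => B * F x) μ := by
  ext i j
  simp only [mul_apply, entrywiseIntegral_apply, ← integral_const_mul]
  exact (integral_finsetSum _ fun k _ => (hF k j).const_mul _).symm

lemma entrywiseIntegral_mul [Fintype m] {F : X → Matrix l m 𝕜} (B : Matrix m n 𝕜)
    (hF : ∀ i j, Integrable (fun x => F x i j) μ) :
    entrywiseIntegral F μ * B = entrywiseIntegral (fun x => F x * B) μ := by
  ext i j
  simp only [mul_apply, entrywiseIntegral_apply, ← integral_mul_const]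
  exact (integral_finsetSum _ fun k _ => (hF i k).mul_const _).symm

lemma trace_mul_trace_eq_sum_mul_single_mul [Fintype m] [Fintype n] [DecidableEq m]
    [DecidableEq n] (P : Matrix m m 𝕜) (Q : Matrix n n 𝕜) :
    P.trace * Q.trace = ∑ a, ∑ j, (P * (single a j 1 : Matrix m n 𝕜) * Q) a j := by
  rw [trace, trace, Finset.sum_mul_sum]
  refine Finset.sum_congr rfl fun a _ => Finset.sum_congr rfl fun j _ => ?_
  rw [mul_apply, Finset.sum_eq_single j (fun k _ hk => by rw [mul_single_apply_of_ne _ _ _ _ _ hk,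
    zero_mul]) (by simp), mul_single_apply_same, mul_one, diag_apply, diag_apply]

end Matrix

namespace FinUnitaryRep

variable {Γ : Type} [Group Γ] [TopologicalSpace Γ] [IsTopologicalGroup Γ] [CompactSpace Γ]
  [MeasurableSpace Γ] [BorelSpace Γ] (μ : Measure Γ) [μ.IsMulLeftInvariant]
  [IsFiniteMeasureOnCompacts μ] (σ τ : FinUnitaryRep Γ)

noncomputable def averageIntertwiner (A : Matrix (Fin σ.dim) (Fin τ.dim) ℂ) :
    Matrix (Fin σ.dim) (Fin τ.dim) ℂ :=
  entrywiseIntegral (fun h => σ.toMatrix h * A * τ.toMatrix h⁻¹) μ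

omit [μ.IsMulLeftInvariant] in
lemma integrable_toMatrix_mul_mul_toMatrix_inv_apply (A : Matrix (Fin σ.dim) (Fin τ.dim) ℂ)
    (B : Matrix (Fin τ.dim) (Fin τ.dim) ℂ) (i : Fin σ.dim) (j : Fin τ.dim) :
    Integrable (fun h => (σ.toMatrix h * A * τ.toMatrix h⁻¹ * B) i j) μ := by
  have hcont : Continuous fun h => (σ.toMatrix h * A * τ.toMatrix h⁻¹ * B) i j := by fun_prop
  exact hcont.integrable_of_hasCompactSupport (.of_compactSpace _)

lemma toMatrix_mul_averageIntertwiner (A : Matrix (Fin σ.dim) (Fin τ.dim) ℂ) (k : Γ) :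
    σ.toMatrix k * averageIntertwiner μ σ τ A = averageIntertwiner μ σ τ A * τ.toMatrix k := by
  have hint := fun i j => by
    simpa using integrable_toMatrix_mul_mul_toMatrix_inv_apply μ σ τ A 1 i j
  rw [averageIntertwiner, mul_entrywiseIntegral _ hint, entrywiseIntegral_mul _ hint]
  ext i j
  rw [entrywiseIntegral_apply, entrywiseIntegral_apply, ← integral_mul_left_eq_self
    (fun h => (σ.toMatrix h * A * τ.toMatrix h⁻¹ * τ.toMatrix k) i j) k]
  congr 1 with h
  rw [Matrix.mul_assoc _ (τ.toMatrix _), ← toMatrix_mul, _root_.mul_inv_rev, inv_mul_cancel_right,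
    toMatrix_mul σ k, Matrix.mul_assoc, Matrix.mul_assoc, Matrix.mul_assoc]

theorem integral_char_mul_char_inv_mul_eq_zero {σ τ : FinUnitaryRep Γ} (hσ : σ.IsIrreducible)
    (hτ : τ.IsIrreducible) (hne : σ.char ≠ τ.char) (g : Γ) :
    ∫ h, σ.char h * τ.char (h⁻¹ * g) ∂μ = 0 := by
  classical
  have hint := integrable_toMatrix_mul_mul_toMatrix_inv_apply μ σ τ
  calc ∫ h, σ.char h * τ.char (h⁻¹ * g) ∂μ
      = ∫ h, ∑ a, ∑ j, (σ.toMatrix h * (single a j 1 : Matrix (Fin σ.dim) (Fin τ.dim) ℂ) *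
          τ.toMatrix h⁻¹ * τ.toMatrix g) a j ∂μ := by
        congr 1 with h
        rw [char_apply, char_apply, toMatrix_mul, trace_mul_trace_eq_sum_mul_single_mul]
        simp only [Matrix.mul_assoc]
    _ = ∑ a, ∑ j, (averageIntertwiner μ σ τ (single a j 1) * τ.toMatrix g) a j := by
        rw [integral_finsetSum _ fun a _ => integrable_finsetSum _ fun j _ => hint _ _ a j]
        refine Finset.sum_congr rfl fun a _ => ?_
        rw [integral_finsetSum _ fun j _ => hint _ _ a j]
        refine Finset.sum_congr rfl fun j _ => ?_
        rw [averageIntertwiner, entrywiseIntegral_mul _ fun i j => by simpa using hint _ 1 i j]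
        rfl
    _ = 0 := by
        simp [eq_zero_of_intertwines hσ hτ hne (toMatrix_mul_averageIntertwiner μ σ τ _)]

end FinUnitaryRep

lemma MeasureTheory.Measure.isMulRightInvariant_of_compactSpace {Γ : Type*} [Group Γ]
    [TopologicalSpace Γ] [IsTopologicalGroup Γ] [CompactSpace Γ] [MeasurableSpace Γ]
    [BorelSpace Γ] (μ : Measure Γ) [μ.IsHaarMeasure] : μ.IsMulRightInvariant := by
  refine ⟨fun g => ?_⟩
  have h := isMulInvariant_eq_smul_of_compactSpace (μ.map (· * g)) μ
  have huniv : μ Set.univ = (μ.map (· * g)).haarScalarFactor μ * μ Set.univ := by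
    simpa [Measure.map_apply (measurable_mul_const g) MeasurableSet.univ] using
      congrArg (· Set.univ) h
  have hone : ((μ.map (· * g)).haarScalarFactor μ : ℝ≥0∞) = 1 :=
    (ENNReal.mul_eq_right (NeZero.ne _) (measure_ne_top μ _)).mp huniv.symm
  rw [h, ENNReal.coe_eq_one.mp hone, one_smul]

lemma Commute.integral_right {X A : Type*} [MeasurableSpace X] {μ : Measure X}
    [NonUnitalNormedRing A] [NormedSpace ℝ A] [IsScalarTower ℝ A A] [SMulCommClass ℝ A A]
    {a : A} {F : X → A} (h : ∀ x, Commute a (F x)) : Commute a (∫ x, F x ∂μ) := by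
  by_cases hF : Integrable F μ
  · simp only [Commute, SemiconjBy, ← integral_const_mul_of_integrable hF,
      ← integral_mul_const_of_integrable hF, (h _).eq]
  · rw [integral_undef hF]
    exact Commute.zero_right a

section isoProj

variable {Γ : Type} [Group Γ] [TopologicalSpace Γ] [MeasurableSpace Γ] (μ : Measure Γ)
  {E : Type} [NormedAddCommGroup E] [NormedSpace ℂ E] (U : Γ →* (E →L[ℂ] E))

lemma commute_isoProj {A : E →L[ℂ] E} (hA : ∀ g, Commute A (U g)) (σ : FinUnitaryRep Γ) :
    Commute A (isoProj μ U σ) :=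
  (Commute.integral_right fun g => (hA g).smul_right _).smul_right _

omit [TopologicalSpace Γ] in
lemma commute_integral_smul_of_mul_comm [MeasurableMul Γ] [μ.IsMulLeftInvariant]
    [μ.IsMulRightInvariant] {f : Γ → ℂ} (hf : ∀ a b, f (a * b) = f (b * a)) (k : Γ) :
    Commute (U k) (∫ g, f g • U g ∂μ) := by
  by_cases hF : Integrable (fun g => f g • U g) μ
  · have hleft : U k * ∫ g, f g • U g ∂μ = ∫ g, f (k⁻¹ * g) • U g ∂μ := by
      rw [← integral_const_mul_of_integrable hF,
        ← integral_mul_left_eq_self (fun g => f (k⁻¹ * g) • U g) k]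
      simp only [inv_mul_cancel_left, map_mul, mul_smul_comm]
    have hright : (∫ g, f g • U g ∂μ) * U k = ∫ g, f (g * k⁻¹) • U g ∂μ := by
      rw [← integral_mul_const_of_integrable hF,
        ← integral_mul_right_eq_self (fun g => f (g * k⁻¹) • U g) k]
      simp only [mul_inv_cancel_right, map_mul, smul_mul_assoc]
    rw [Commute, SemiconjBy, hleft, hright]
    simp only [hf k⁻¹]
  · rw [integral_undef hF]
    exact Commute.zero_right _

lemma commute_isoProj_self [IsTopologicalGroup Γ] [CompactSpace Γ] [BorelSpace Γ]
    [μ.IsHaarMeasure] (σ : FinUnitaryRep Γ) (k : Γ) : Commute (U k) (isoProj μ U σ) :=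
  have := μ.isMulRightInvariant_of_compactSpace
  (commute_integral_smul_of_mul_comm μ U (fun a b => by rw [σ.char_mul_comm]) k).smul_right _

end isoProj

section orthogonality

variable {Γ : Type} [Group Γ] [TopologicalSpace Γ] [IsTopologicalGroup Γ] [CompactSpace Γ]
  [MeasurableSpace Γ] [BorelSpace Γ] (μ : Measure Γ)
  {E : Type} [NormedAddCommGroup E] [NormedSpace ℂ E] (U : Γ →* (E →L[ℂ] E))

omit [IsTopologicalGroup Γ] [CompactSpace Γ] [BorelSpace Γ] in
lemma isoProj_apply {σ : FinUnitaryRep Γ} (hI : Integrable (fun g => conj (σ.char g) • U g) μ)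
    (ξ : E) : isoProj μ U σ ξ = ∫ g, ((σ.dim : ℂ) * conj (σ.char g)) • U g ξ ∂μ := by
  rw [isoProj, _root_.smul_apply, ContinuousLinearMap.integral_apply hI,
    ← integral_smul]
  simp only [_root_.smul_apply, mul_smul]

variable [CompleteSpace E] [IsFiniteMeasureOnCompacts μ] (hU : ∀ ξ, Continuous fun g => U g ξ)
include hU

lemma integral_smul_apply_integral_smul_apply [μ.IsMulLeftInvariant] {a b : Γ → ℂ}
    (ha : Continuous a) (hb : Continuous b) (ξ : E) :
    ∫ g, a g • U g (∫ k, b k • U k ξ ∂μ) ∂μ = ∫ k, (∫ g, a g * b (g⁻¹ * k) ∂μ) • U k ξ ∂μ := by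
  have hb_int : Integrable (fun k => b k • U k ξ) μ :=
    (hb.smul (hU ξ)).integrable_of_hasCompactSupport (.of_compactSpace _)
  calc ∫ g, a g • U g (∫ k, b k • U k ξ ∂μ) ∂μ
      = ∫ g, ∫ k, (a g * b k) • U (g * k) ξ ∂μ ∂μ := by
        congr 1 with g
        rw [← (U g).integral_comp_comm hb_int, ← integral_smul]
        simp only [map_smul, map_mul, mul_apply_eq_comp, mul_smul]
    _ = ∫ g, ∫ k, (a g * b (g⁻¹ * k)) • U k ξ ∂μ ∂μ := by
        congr 1 with g
        rw [← integral_mul_left_eq_self (fun k => (a g * b (g⁻¹ * k)) • U k ξ) g]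
        simp only [inv_mul_cancel_left]
    _ = ∫ k, ∫ g, (a g * b (g⁻¹ * k)) • U k ξ ∂μ ∂μ :=
        integral_integral_swap_of_hasCompactSupport (by fun_prop) (.of_compactSpace _)
    _ = ∫ k, (∫ g, a g * b (g⁻¹ * k) ∂μ) • U k ξ ∂μ := by
        simp only [integral_smul_const]

theorem isoProj_mul_isoProj_eq_zero [μ.IsMulLeftInvariant] {σ τ : FinUnitaryRep Γ}
    (hσ : σ.IsIrreducible) (hτ : τ.IsIrreducible) (hne : σ.char ≠ τ.char) :
    isoProj μ U σ * isoProj μ U τ = 0 := by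
  -- `isoProj` is a Bochner integral in operator norm, hence `0` unless `g ↦ U g` is integrable.
  by_cases hIσ : Integrable (fun g => conj (σ.char g) • U g) μ
  swap
  · simp [isoProj, integral_undef hIσ]
  by_cases hIτ : Integrable (fun g => conj (τ.char g) • U g) μ
  swap
  · simp [isoProj, integral_undef hIτ]
  have hconv : ∀ k,
      ∫ g, (σ.dim * conj (σ.char g)) * (τ.dim * conj (τ.char (g⁻¹ * k))) ∂μ = 0 := by
    intro k
    simp_rw [mul_mul_mul_comm, ← map_mul]
    rw [integral_const_mul, integral_conj,
      FinUnitaryRep.integral_char_mul_char_inv_mul_eq_zero μ hσ hτ hne, map_zero, mul_zero]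
  ext ξ
  rw [mul_apply_eq_comp, isoProj_apply μ U hIσ, isoProj_apply μ U hIτ,
    integral_smul_apply_integral_smul_apply μ U hU (by fun_prop) (by fun_prop)]
  simp [hconv]

theorem harmonicallyProper_of_commute_isoProj [μ.IsMulLeftInvariant] {B : E →L[ℂ] E}
    (hB : ∀ ρ, Commute B (isoProj μ U ρ)) : HarmonicallyProper μ U U B := by
  have hvanish : ∀ ρ ρ' : FinUnitaryRep Γ, ρ.IsIrreducible → ρ'.IsIrreducible →
      ρ.char ≠ ρ'.char → (isoProj μ U ρ).comp (B.comp (isoProj μ U ρ')) = 0 := by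
    intro ρ ρ' hρ hρ' hne
    change isoProj μ U ρ * (B * isoProj μ U ρ') = 0
    rw [(hB ρ').eq, ← mul_assoc, isoProj_mul_isoProj_eq_zero μ U hU hρ hρ' hne, zero_mul]
  intro σ hσ
  refine (Set.finite_singleton σ.char).subset ?_
  rintro _ ⟨τ, hτ, rfl, hστ⟩
  by_contra hne
  replace hne : σ.char ≠ τ.char := fun h => hne h.symm
  rcases hστ with h | h
  exacts [h (hvanish σ τ hσ hτ hne), h (hvanish τ σ hτ hσ hne.symm)]

end orthogonality

lemma commute_isoProj_isoProj_of_le {G : Type} [Group G] [TopologicalSpace G]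
    [IsTopologicalGroup G] {H K : Subgroup G} (hHK : H ≤ K) [MeasurableSpace H]
    [CompactSpace K] [MeasurableSpace K] [BorelSpace K] (μH : Measure H) (μK : Measure K)
    [μK.IsHaarMeasure] {E : Type} [NormedAddCommGroup E] [NormedSpace ℂ E]
    (U : G →* (E →L[ℂ] E)) (σ : FinUnitaryRep H) (ρ : FinUnitaryRep K) :
    Commute (isoProj μH (U.comp H.subtype) σ) (isoProj μK (U.comp K.subtype) ρ) :=
  (commute_isoProj μH _ (fun h => (commute_isoProj_self μK _ ρ ⟨h, hHK h.2⟩).symm) σ).symm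

theorem isoProj_harmonicallyProper_of_nested_general
    {G : Type} [Group G] [TopologicalSpace G] [IsTopologicalGroup G]
    [CompactSpace G]
    (H₁ H₂ : Subgroup G) (hH₁ : IsClosed (H₁ : Set G)) (hH₂ : IsClosed (H₂ : Set G))
    (hnested : H₁ ≤ H₂ ∨ H₂ ≤ H₁)
    [MeasurableSpace H₁] [BorelSpace H₁]
    (μ₁ : Measure H₁) [μ₁.IsHaarMeasure]
    [MeasurableSpace H₂] [BorelSpace H₂]
    (μ₂ : Measure H₂) [μ₂.IsHaarMeasure]
    (σ : FinUnitaryRep H₁)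
    {𝓗 : Type} [NormedAddCommGroup 𝓗] [InnerProductSpace ℂ 𝓗] [CompleteSpace 𝓗]
    (U : G →* (𝓗 →L[ℂ] 𝓗))
    (hUcont : ∀ ξ : 𝓗, Continuous fun g => U g ξ) :
    HarmonicallyProper μ₂ (U.comp H₂.subtype) (U.comp H₂.subtype)
        (isoProj μ₁ (U.comp H₁.subtype) σ) ∧
      isoProj μ₁ (U.comp H₁.subtype) σ ∈ AH μ₂ (U.comp H₂.subtype) (U.comp H₂.subtype) := by
  have : CompactSpace H₁ := isCompact_iff_compactSpace.mp hH₁.isCompact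
  have : CompactSpace H₂ := isCompact_iff_compactSpace.mp hH₂.isCompact
  have hcomm : ∀ ρ : FinUnitaryRep H₂, Commute (isoProj μ₁ (U.comp H₁.subtype) σ)
      (isoProj μ₂ (U.comp H₂.subtype) ρ) := fun ρ =>
    hnested.elim (fun h => commute_isoProj_isoProj_of_le h μ₁ μ₂ U σ ρ)
      (fun h => (commute_isoProj_isoProj_of_le h μ₂ μ₁ U ρ σ).symm)
  have hproper := harmonicallyProper_of_commute_isoProj μ₂ _
    (fun ξ => (hUcont ξ).comp continuous_subtype_val) hcomm
  exact ⟨hproper, subset_closure hproper⟩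

theorem isoProj_harmonicallyProper_of_nested
    {G : Type} [Group G] [TopologicalSpace G] [IsTopologicalGroup G]
    [CompactSpace G] [T2Space G]
    (H₁ H₂ : Subgroup G) (hH₁ : IsClosed (H₁ : Set G)) (hH₂ : IsClosed (H₂ : Set G))
    (hnested : H₁ ≤ H₂ ∨ H₂ ≤ H₁)
    [MeasurableSpace H₁] [BorelSpace H₁]
    (μ₁ : Measure H₁) [μ₁.IsHaarMeasure] [IsProbabilityMeasure μ₁]
    [MeasurableSpace H₂] [BorelSpace H₂]
    (μ₂ : Measure H₂) [μ₂.IsHaarMeasure] [IsProbabilityMeasure μ₂]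
    (σ : FinUnitaryRep H₁) (hσ : σ.IsIrreducible)
    {𝓗 : Type} [NormedAddCommGroup 𝓗] [InnerProductSpace ℂ 𝓗] [CompleteSpace 𝓗]
    (U : G →* (𝓗 →L[ℂ] 𝓗))
    (hUcont : ∀ ξ : 𝓗, Continuous fun g => U g ξ)
    (hUunit : ∀ (g : G) (x y : 𝓗), inner ℂ (U g x) (U g y) = (inner ℂ x y : ℂ)) :
    HarmonicallyProper μ₂ (U.comp H₂.subtype) (U.comp H₂.subtype)
        (isoProj μ₁ (U.comp H₁.subtype) σ) ∧
      isoProj μ₁ (U.comp H₁.subtype) σ ∈ AH μ₂ (U.comp H₂.subtype) (U.comp H₂.subtype) :=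
  isoProj_harmonicallyProper_of_nested_general H₁ H₂ hH₁ hH₂ hnested μ₁ μ₂ σ U hUcont
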